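/- Let μ = μ_{R,B} be the self-affine measure for R = [[2,1],[0,2]] and B = {(0,0),(1,0)}. For every t ∈ [0,1], the level set L_t = {Λ : Λ is a spectrum of μ and dim_Be(Λ) = t} has the cardinality of the continuum, i.e. #L_t = 2^{ℵ₀}. -/

import Mathlib

open MeasureTheory Filter Set Metric
open scoped ENNReal

noncomputable section

/-- The plane with the Euclidean metric. -/
abbrev Plane : Type := EuclideanSpace ℝ (Fin 2)

/-- The point `(a, b)` of the Euclidean plane. -/
def pt (a b : ℝ) : Plane := WithLp.toLp 2 ![a, b]

/-- The self-affine measure `μ_{R,B}` for `R = [[2,1],[0,2]]`, `B = {(0,0),(1,0)}`: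
the pushforward of Lebesgue measure on `[0,1]` under `x ↦ (x, 0)`. -/
def muRB : Measure Plane :=
  Measure.map (fun x : ℝ => pt x 0) (volume.restrict (Set.Icc (0:ℝ) 1))

instance : IsProbabilityMeasure (volume.restrict (Set.Icc (0:ℝ) 1)) :=
  ⟨by simp [Real.volume_Icc]⟩

lemma measurable_pt0 : Measurable (fun x : ℝ => pt x 0) := by
  unfold pt
  refine (WithLp.measurable_toLp 2 (Fin 2 → ℝ)).comp (measurable_pi_lambda _ (fun i => ?_))
  fin_cases i
  · simp only [Matrix.cons_val_zero]
    exact measurable_id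
  · simp only [Matrix.cons_val_one, Matrix.head_cons]
    exact measurable_const

instance : IsProbabilityMeasure muRB :=
  Measure.isProbabilityMeasure_map measurable_pt0.aemeasurable

/-- The Fourier transform `μ̂(ξ) = ∫ e^{-2πi⟨ξ,x⟩} dμ(x)` of a measure on the plane. -/
def fourierTransform (μ : Measure Plane) (ξ : Plane) : ℂ :=
  ∫ x, Complex.exp ((-(2 * Real.pi * (inner ℝ ξ x : ℝ)) : ℝ) * Complex.I) ∂μ

/-- The exponential function `e_λ(x) = e^{-2πi⟨λ,x⟩}`. -/
def expFn (lam : Plane) : Plane → ℂ :=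
  fun x => Complex.exp ((-(2 * Real.pi * (inner ℝ lam x : ℝ)) : ℝ) * Complex.I)

lemma expFn_memLp (μ : Measure Plane) [IsFiniteMeasure μ] (lam : Plane) :
    MemLp (expFn lam) 2 μ := by
  refine MemLp.of_bound ?_ 1 ?_
  · apply Continuous.aestronglyMeasurable
    unfold expFn
    have h1 : Continuous fun x : Plane => (inner ℝ lam x : ℝ) :=
      continuous_const.inner continuous_id
    exact Complex.continuous_exp.comp
      ((Complex.continuous_ofReal.comp ((continuous_const.mul h1).neg)).mul continuous_const)
  · refine Eventually.of_forall fun x => ?_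
    unfold expFn
    rw [Complex.norm_exp_ofReal_mul_I]

/-- The exponential `e_λ` as an element of `L²(μ)`. -/
def expLp (μ : Measure Plane) [IsFiniteMeasure μ] (lam : Plane) : Lp ℂ 2 μ :=
  (expFn_memLp μ lam).toLp _

/-- `Λ` is an orthogonal set of `μ`: the exponentials `{e_λ : λ ∈ Λ}` form an
orthonormal family in `L²(μ)`. -/
def IsOrthogonalSet (μ : Measure Plane) [IsFiniteMeasure μ] (Λ : Set Plane) : Prop :=
  Orthonormal ℂ (fun lam : Λ => expLp μ lam)

/-- `Λ` is a spectrum of `μ`: the exponentials `{e_λ : λ ∈ Λ}` form an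
orthonormal basis of `L²(μ)`. -/
def IsSpectrum (μ : Measure Plane) [IsFiniteMeasure μ] (Λ : Set Plane) : Prop :=
  Orthonormal ℂ (fun lam : Λ => expLp μ lam) ∧
    (Submodule.span ℂ (Set.range (fun lam : Λ => expLp μ lam))).topologicalClosure = ⊤

/-- The upper `r`-Beurling density
`D_r^+(Λ) = limsup_{h→∞} sup_{x} #(Λ ∩ B(x,h)) / h^r`. -/
def beurlingDensity (r : ℝ) (Λ : Set Plane) : ℝ≥0∞ :=
  limsup (fun h : ℝ =>
    ⨆ x : Plane, ((Λ ∩ Metric.ball x h).encard : ℝ≥0∞) / ENNReal.ofReal (h ^ r)) atTop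

/-- The upper `r`-density (centered at the origin)
`B_r^+(Λ) = limsup_{h→∞} #(Λ ∩ B(0,h)) / h^r`. -/
def upperDensity (r : ℝ) (Λ : Set Plane) : ℝ≥0∞ :=
  limsup (fun h : ℝ =>
    ((Λ ∩ Metric.ball (0 : Plane) h).encard : ℝ≥0∞) / ENNReal.ofReal (h ^ r)) atTop

/-- The Beurling dimension `dim_Be(Λ) = sup {r > 0 : D_r^+(Λ) = ∞}`
(equal to `0` when the set is empty, by the convention `sSup ∅ = 0` in `ℝ`). -/
def beurlingDim (Λ : Set Plane) : ℝ :=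
  sSup {r : ℝ | 0 < r ∧ beurlingDensity r Λ = ⊤}

/-- The Banach dimension `dim_Ba(Λ) = sup {r > 0 : B_r^+(Λ) = ∞}`. -/
def banachDim (Λ : Set Plane) : ℝ :=
  sSup {r : ℝ | 0 < r ∧ upperDensity r Λ = ⊤}

/-- The sign of an integer, as a real number. -/
def isgn (n : ℤ) : ℝ := (Int.sign n : ℝ)

end

/-!
The Fourier transform of `μ` is `μ̂(ξ) = ∫₀¹ e^{-2πi ξ₀ u} du`, which vanishes exactly when `ξ₀`
is a nonzero integer. Hence `Λ` is orthogonal iff the first coordinates of its points are distinct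
and differ by integers, and by the completeness of `{e^{2πinu}}` in `L²[0,1]` it is a spectrum as
soon as these first coordinates exhaust `ℤ`. So every graph `{(n, g n) : n ∈ ℤ}` is a spectrum,
whatever `g`. With `g n = |n|^{1/t} + s` (resp. `e^{|n|} - 1 + s` for `t = 0`) a ball of radius `h`
meets the graph in `≍ h^t` points (resp. `O(log h)` points), so `dim_Be = t`, and the shifts
`s ∈ ℝ` give continuum many such spectra. Conversely every spectrum is countable, and the plane
has only `𝔠^ℵ₀ = 𝔠` countable subsets.
-/

open ComplexConjugate

lemma continuous_expFn (a : Plane) : Continuous (expFn a) := by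
  unfold expFn
  fun_prop

lemma inner_expLp_left (μ : Measure Plane) [IsFiniteMeasure μ] (a : Plane) (f : Lp ℂ 2 μ) :
    inner ℂ (expLp μ a) f = ∫ x, conj (expFn a x) * f x ∂μ := by
  rw [L2.inner_def]
  refine integral_congr_ae ?_
  filter_upwards [(expFn_memLp μ a).coeFn_toLp] with x hx
  rw [RCLike.inner_apply, expLp, hx, mul_comm]

lemma conj_expFn_mul_expFn (a b x : Plane) :
    conj (expFn a x) * expFn b x = expFn (b - a) x := by
  simp only [expFn, ← Complex.exp_conj, ← Complex.exp_add, map_mul, Complex.conj_ofReal,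
    Complex.conj_I, inner_sub_left]
  congr 1
  push_cast
  ring

lemma inner_expLp_expLp (μ : Measure Plane) [IsFiniteMeasure μ] (a b : Plane) :
    inner ℂ (expLp μ a) (expLp μ b) = fourierTransform μ (b - a) := by
  rw [inner_expLp_left, fourierTransform]
  refine integral_congr_ae ?_
  filter_upwards [(expFn_memLp μ b).coeFn_toLp] with x hx
  rw [expLp, hx, conj_expFn_mul_expFn]
  rfl

lemma fourierTransform_zero (μ : Measure Plane) [IsProbabilityMeasure μ] :
    fourierTransform μ 0 = 1 := by
  simp [fourierTransform]

lemma muRB_eq_map_Ioc :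
    muRB = Measure.map (fun x : ℝ => pt x 0) (volume.restrict (Ioc (0 : ℝ) 1)) := by
  rw [muRB, Measure.restrict_congr_set Ioc_ae_eq_Icc]

lemma integral_muRB {g : Plane → ℂ} (hg : AEStronglyMeasurable g muRB) :
    ∫ x, g x ∂muRB = ∫ u in (0 : ℝ)..1, g (pt u 0) := by
  rw [intervalIntegral.integral_of_le zero_le_one]
  rw [muRB_eq_map_Ioc] at hg ⊢
  exact integral_map measurable_pt0.aemeasurable hg

lemma expFn_pt (a : Plane) (u : ℝ) :
    expFn a (pt u 0) = Complex.exp (-(2 * Real.pi * Complex.I * a 0) * u) := by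
  simp only [expFn, pt, PiLp.inner_apply, Fin.sum_univ_two, RCLike.inner_apply, conj_trivial]
  congr 1
  push_cast
  ring

lemma fourierTransform_muRB (ξ : Plane) :
    fourierTransform muRB ξ =
      ∫ u in (0 : ℝ)..1, Complex.exp (-(2 * Real.pi * Complex.I * ξ 0) * u) := by
  change ∫ x, expFn ξ x ∂muRB = _
  simp only [integral_muRB (continuous_expFn ξ).aestronglyMeasurable, expFn_pt]

lemma fourierTransform_muRB_eq_zero_iff (ξ : Plane) :
    fourierTransform muRB ξ = 0 ↔ ∃ n : ℤ, n ≠ 0 ∧ ξ 0 = n := by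
  rw [fourierTransform_muRB]
  by_cases hξ : ξ 0 = 0
  · simp [hξ, eq_comm (a := (0 : ℝ))]
  have h2πI : 2 * Real.pi * Complex.I ≠ 0 := by simp [Real.pi_ne_zero]
  have hc : -(2 * Real.pi * Complex.I * ξ 0) ≠ 0 := by simp [hξ, Real.pi_ne_zero]
  rw [integral_exp_mul_complex hc, div_eq_zero_iff, or_iff_left hc, sub_eq_zero]
  simp only [Complex.ofReal_one, mul_one, Complex.ofReal_zero, mul_zero, Complex.exp_zero,
    Complex.exp_eq_one_iff]
  constructor
  · rintro ⟨n, hn⟩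
    have hξn : (ξ 0 : ℂ) = ((-n : ℤ) : ℂ) := by
      apply mul_left_cancel₀ h2πI
      push_cast
      linear_combination -hn
    norm_cast at hξn
    refine ⟨-n, fun hn0 => hξ ?_, hξn⟩
    rw [hξn, hn0, Int.cast_zero]
  · rintro ⟨n, -, hn⟩
    exact ⟨-n, by rw [hn]; push_cast; ring⟩

lemma isOrthogonalSet_muRB_iff {Λ : Set Plane} :
    IsOrthogonalSet muRB Λ ↔ Λ.Pairwise fun a b => ∃ n : ℤ, n ≠ 0 ∧ b 0 - a 0 = n := by
  classical
  simp only [IsOrthogonalSet, orthonormal_iff_ite, inner_expLp_expLp]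
  constructor
  · intro h a ha b hb hab
    have hab' : (⟨a, ha⟩ : Λ) ≠ ⟨b, hb⟩ := fun h => hab (congrArg Subtype.val h)
    have hba := h ⟨a, ha⟩ ⟨b, hb⟩
    rwa [if_neg hab', fourierTransform_muRB_eq_zero_iff] at hba
  · rintro h ⟨a, ha⟩ ⟨b, hb⟩
    split_ifs with hab
    · rw [hab, sub_self, fourierTransform_zero]
    · rw [fourierTransform_muRB_eq_zero_iff]
      simpa using h ha hb (fun h => hab (Subtype.ext h))

lemma countable_of_isOrthogonalSet_muRB {Λ : Set Plane} (h : IsOrthogonalSet muRB Λ) :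
    Λ.Countable := by
  rcases Λ.eq_empty_or_nonempty with rfl | ⟨a₀, ha₀⟩
  · exact countable_empty
  rw [isOrthogonalSet_muRB_iff] at h
  refine MapsTo.countable_of_injOn (f := fun a : Plane => a 0 - a₀ 0)
    (t := range ((↑) : ℤ → ℝ)) ?_ ?_ (countable_range _)
  · intro a ha
    obtain rfl | hne := eq_or_ne a a₀
    · exact ⟨0, by simp⟩
    · obtain ⟨n, -, hn⟩ := h ha₀ ha hne.symm
      exact ⟨n, hn.symm⟩
  · intro a ha b hb hab
    by_contra hne
    obtain ⟨n, hn0, hn⟩ := h ha hb hne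
    have hab : a 0 = b 0 := by simpa using hab
    exact hn0 (Int.cast_eq_zero.mp (hn.symm.trans (sub_eq_zero.mpr hab.symm)))

lemma ae_eq_zero_of_fourierCoeffOn_eq_zero {a b : ℝ} (hab : a < b) {F : ℝ → ℂ}
    (hF : MemLp F 2 (volume.restrict (Ioc a b))) (h : ∀ n, fourierCoeffOn hab F n = 0) :
    F =ᵐ[volume.restrict (Ioc a b)] 0 := by
  have hsum := hasSum_sq_fourierCoeffOn hab hF
  simp only [h, norm_zero, zero_pow two_ne_zero] at hsum
  have hint : ∫ x in Ioc a b, ‖F x‖ ^ 2 = 0 := by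
    have := hasSum_zero.unique hsum
    rw [intervalIntegral.integral_of_le hab.le] at this
    simpa [(sub_pos.mpr hab).ne'] using this.symm
  rw [integral_eq_zero_iff_of_nonneg (fun x => by positivity)
    (hF.integrable_norm_pow two_ne_zero)] at hint
  filter_upwards [hint] with x hx
  simpa using hx

lemma inner_expLp_muRB_eq_fourierCoeffOn {n : ℤ} {a : Plane} (ha : a 0 = -n)
    (f : Lp ℂ 2 muRB) :
    inner ℂ (expLp muRB a) f = fourierCoeffOn zero_lt_one (fun u => f (pt u 0)) n := by
  have hmeas : AEStronglyMeasurable (fun x => conj (expFn a x) * f x) muRB :=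
    (Complex.continuous_conj.comp (continuous_expFn a)).aestronglyMeasurable.mul
      (Lp.aestronglyMeasurable f)
  rw [inner_expLp_left, integral_muRB hmeas, fourierCoeffOn_eq_integral,
    show (1 : ℝ) / (1 - 0) = 1 by norm_num, one_smul]
  refine intervalIntegral.integral_congr fun u _ => ?_
  simp only [fourier_coe_apply, expFn_pt, ha, smul_eq_mul, ← Complex.exp_conj]
  congr 2
  simp only [map_mul, map_neg, map_ofNat, Complex.conj_ofReal, Complex.conj_I]
  push_cast
  ring

lemma topologicalClosure_span_expLp_muRB {Λ : Set Plane} (hΛ : ∀ n : ℤ, ∃ a ∈ Λ, a 0 = n) :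
    (Submodule.span ℂ (range fun a : Λ => expLp muRB a)).topologicalClosure = ⊤ := by
  rw [Submodule.topologicalClosure_eq_top_iff, Submodule.eq_bot_iff]
  intro f hf
  have hfmap : MemLp f 2 (Measure.map (fun x : ℝ => pt x 0) (volume.restrict (Ioc 0 1))) :=
    muRB_eq_map_Ioc ▸ Lp.memLp f
  have hF : MemLp (fun u => f (pt u 0)) 2 (volume.restrict (Ioc 0 1)) :=
    (memLp_map_measure_iff hfmap.aestronglyMeasurable measurable_pt0.aemeasurable).mp hfmap
  have hcoeff : ∀ n, fourierCoeffOn zero_lt_one (fun u => f (pt u 0)) n = 0 := by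
    intro n
    obtain ⟨a, ha, ha0⟩ := hΛ (-n)
    rw [← inner_expLp_muRB_eq_fourierCoeffOn (by rw [ha0, Int.cast_neg])]
    exact (Submodule.mem_orthogonal _ _).mp hf _ (Submodule.subset_span ⟨⟨a, ha⟩, rfl⟩)
  have hf0 : ∀ᵐ x ∂(Measure.map (fun x : ℝ => pt x 0) (volume.restrict (Ioc 0 1))), f x = 0 :=
    (ae_map_iff measurable_pt0.aemeasurable
      ((Lp.stronglyMeasurable f).measurable (measurableSet_singleton 0))).mpr
      (ae_eq_zero_of_fourierCoeffOn_eq_zero zero_lt_one hF hcoeff)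
  rw [← muRB_eq_map_Ioc] at hf0
  exact Lp.eq_zero_iff_ae_eq_zero.mpr hf0

def intGraph (g : ℤ → ℝ) : Set Plane := range fun n : ℤ => pt n (g n)

lemma isSpectrum_muRB_intGraph (g : ℤ → ℝ) : IsSpectrum muRB (intGraph g) := by
  refine ⟨isOrthogonalSet_muRB_iff.mpr ?_,
    topologicalClosure_span_expLp_muRB fun n => ⟨_, ⟨n, rfl⟩, rfl⟩⟩
  rintro _ ⟨m, rfl⟩ _ ⟨n, rfl⟩ hmn
  exact ⟨n - m, sub_ne_zero.mpr (by rintro rfl; exact hmn rfl), by simp [pt]⟩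

lemma pt_graph_injective (g : ℤ → ℝ) : Function.Injective fun n : ℤ => pt n (g n) := by
  intro m n hmn
  simpa [pt] using congrArg (fun p : Plane => p 0) hmn

lemma intGraph_add_const_injective (g : ℤ → ℝ) :
    Function.Injective fun s : ℝ => intGraph fun n => g n + s := by
  intro s s' hss'
  obtain ⟨n, hn⟩ : pt ((0 : ℤ) : ℝ) (g 0 + s) ∈ intGraph fun n => g n + s' := by
    simp only at hss'
    exact hss' ▸ ⟨0, rfl⟩
  obtain rfl : n = 0 := by simpa [pt] using congrArg (fun p : Plane => p 0) hn
  simpa [pt] using (congrArg (fun p : Plane => p 1) hn).symm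

lemma dist_pt (a b c d : ℝ) : dist (pt a b) (pt c d) = √((a - c) ^ 2 + (b - d) ^ 2) := by
  simp [EuclideanSpace.dist_eq, pt, Fin.sum_univ_two, Real.dist_eq, sq_abs]

lemma encard_le_of_abs_sub_le {S : Set ℕ} {D : ℝ}
    (hS : ∀ m ∈ S, ∀ n ∈ S, |(m : ℝ) - n| ≤ D) :
    (S.encard : ℝ≥0∞) ≤ ENNReal.ofReal (D + 1) := by
  rcases S.eq_empty_or_nonempty with rfl | hne
  · simp
  have ha := Nat.sInf_mem hne
  have hD : 0 ≤ D := (abs_nonneg _).trans (hS _ ha _ ha)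
  have hsub : S ⊆ Finset.Icc (sInf S) (sInf S + ⌊D⌋₊) := by
    intro n hn
    have hle := Nat.sInf_le hn
    have : n - sInf S ≤ ⌊D⌋₊ := Nat.le_floor <| by
      rw [Nat.cast_sub hle]
      exact (le_abs_self _).trans (hS n hn _ ha)
    simp only [Finset.coe_Icc, mem_Icc]
    omega
  calc (S.encard : ℝ≥0∞) ≤ ((Finset.Icc (sInf S) (sInf S + ⌊D⌋₊) : Set ℕ).encard : ℝ≥0∞) :=
        ENat.toENNReal_le.mpr (encard_mono hsub)
    _ = ((⌊D⌋₊ + 1 : ℕ) : ℝ≥0∞) := by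
        rw [encard_coe_eq_coe_finsetCard, Nat.card_Icc,
          show sInf S + ⌊D⌋₊ + 1 - sInf S = ⌊D⌋₊ + 1 by omega]
        rfl
    _ ≤ ENNReal.ofReal (D + 1) := by
        rw [← ENNReal.ofReal_natCast]
        exact ENNReal.ofReal_le_ofReal (by push_cast; linarith [Nat.floor_le hD])

lemma encard_le_encard_natAbs_image_add (T : Set ℤ) :
    T.encard ≤ (Int.natAbs '' T).encard + (Int.natAbs '' T).encard := by
  have hT : T ⊆ ((↑) : ℕ → ℤ) '' (Int.natAbs '' T) ∪ (fun k : ℕ => -(k : ℤ)) '' (Int.natAbs '' T) :=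
    by
    intro n hn
    rcases Int.natAbs_eq n with hn' | hn'
    · exact Or.inl ⟨_, ⟨n, hn, rfl⟩, hn'.symm⟩
    · exact Or.inr ⟨_, ⟨n, hn, rfl⟩, hn'.symm⟩
  exact (encard_mono hT).trans
    ((encard_union_le _ _).trans (add_le_add (encard_image_le _ _) (encard_image_le _ _)))

lemma beurlingDensity_ne_top_of_eventually_le_rpow {Λ : Set Plane} {r : ℝ} (C : ℝ)
    (hC : ∀ᶠ h in atTop, ∀ x, ((Λ ∩ ball x h).encard : ℝ≥0∞) ≤ ENNReal.ofReal (C * h ^ r)) :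
    beurlingDensity r Λ ≠ ⊤ := by
  refine ne_top_of_le_ne_top (ENNReal.ofReal_ne_top (r := C))
    (limsup_le_of_le (by isBoundedDefault) ?_)
  filter_upwards [hC, eventually_gt_atTop 0] with h hh hpos
  refine iSup_le fun x => ENNReal.div_le_of_le_mul ?_
  rw [← ENNReal.ofReal_mul' (Real.rpow_nonneg hpos.le r)]
  exact hh x

lemma beurlingDensity_eq_top_of_eventually_rpow_le {Λ : Set Plane} {r t c : ℝ} (hc : 0 < c)
    (hrt : r < t)
    (hcount : ∀ᶠ h in atTop, ∃ x, ENNReal.ofReal (c * h ^ t) ≤ (Λ ∩ ball x h).encard) :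
    beurlingDensity r Λ = ⊤ := by
  have htend : Tendsto (fun h : ℝ => ENNReal.ofReal (c * h ^ (t - r))) atTop (nhds ⊤) :=
    ENNReal.tendsto_ofReal_atTop.comp
      ((tendsto_rpow_atTop (sub_pos.mpr hrt)).const_mul_atTop hc)
  rw [beurlingDensity, ← top_le_iff, ← htend.limsup_eq]
  refine limsup_le_limsup ?_
  filter_upwards [hcount, eventually_gt_atTop 0] with h ⟨x, hx⟩ hpos
  refine le_iSup_of_le x ?_
  rw [Real.rpow_sub hpos, ← mul_div_assoc, ENNReal.ofReal_div_of_pos (Real.rpow_pos_of_pos hpos r)]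
  exact ENNReal.div_le_div_right hx _

lemma beurlingDim_eq {Λ : Set Plane} {t : ℝ} (ht : 0 ≤ t)
    (hlt : ∀ r, 0 < r → r < t → beurlingDensity r Λ = ⊤)
    (hge : ∀ r, 0 < r → t ≤ r → beurlingDensity r Λ ≠ ⊤) :
    beurlingDim Λ = t := by
  have hset : {r : ℝ | 0 < r ∧ beurlingDensity r Λ = ⊤} = Ioo 0 t := by
    ext r
    exact ⟨fun ⟨hr, htop⟩ => ⟨hr, lt_of_not_ge fun htr => hge r hr htr htop⟩,
      fun ⟨hr, hrt⟩ => ⟨hr, hlt r hr hrt⟩⟩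
  rw [beurlingDim, hset]
  rcases ht.eq_or_lt with rfl | ht
  · simp
  · exact csSup_Ioo ht


/-- `φ` inverts `y` on `ℕ`; being subadditive, it bounds the number of indices `k` whose values
`y k` fit into a window of height `2h` by `φ (2h) + 1`. -/
structure GrowthProfile where
  y : ℕ → ℝ
  φ : ℝ → ℝ
  φ_y (k : ℕ) : φ (y k) = k
  le_y (k : ℕ) : (k : ℝ) ≤ y k
  strictMonoOn_φ : StrictMonoOn φ (Ici 0)
  φ_add_le {a b : ℝ} : 0 ≤ a → 0 ≤ b → φ (a + b) ≤ φ a + φ b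

namespace GrowthProfile

variable (P : GrowthProfile)

def graph (s : ℝ) : Set Plane := intGraph fun n => P.y n.natAbs + s

lemma y_nonneg (k : ℕ) : 0 ≤ P.y k := (Nat.cast_nonneg k).trans (P.le_y k)

lemma y_le_iff {k : ℕ} {v : ℝ} (hv : 0 ≤ v) : P.y k ≤ v ↔ (k : ℝ) ≤ P.φ v := by
  rw [← P.φ_y, P.strictMonoOn_φ.le_iff_le (P.y_nonneg k) hv]

lemma monotone_y : Monotone P.y := fun m n hmn =>
  (P.y_le_iff (P.y_nonneg n)).mpr (by rw [P.φ_y]; exact_mod_cast hmn)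

lemma abs_sub_le_φ (m n : ℕ) : |(m : ℝ) - n| ≤ P.φ |P.y m - P.y n| := by
  wlog hnm : n ≤ m generalizing m n
  · rw [abs_sub_comm, abs_sub_comm (P.y m)]
    exact this n m (le_of_not_ge hnm)
  have hy := sub_nonneg.mpr (P.monotone_y hnm)
  have hadd := P.φ_add_le (P.y_nonneg n) hy
  rw [add_sub_cancel, P.φ_y, P.φ_y] at hadd
  rw [abs_of_nonneg hy, abs_of_nonneg (by simpa using hnm)]
  linarith

lemma encard_graph_inter_ball_le (s : ℝ) (x : Plane) (h : ℝ) :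
    ((P.graph s ∩ ball x h).encard : ℝ≥0∞) ≤ ENNReal.ofReal (2 * (P.φ (2 * h) + 1)) := by
  set f := fun n : ℤ => pt n (P.y n.natAbs + s)
  set A := Int.natAbs '' (f ⁻¹' ball x h)
  have hdist : ∀ n ∈ f ⁻¹' ball x h, |P.y n.natAbs + s - x 1| < h := fun n hn => by
    simpa [f, pt, Real.dist_eq] using (PiLp.dist_apply_le _ x 1).trans_lt hn
  have hA : ∀ m ∈ A, ∀ n ∈ A, |(m : ℝ) - n| ≤ P.φ (2 * h) := by
    rintro _ ⟨m, hm, rfl⟩ _ ⟨n, hn, rfl⟩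
    have hm' := abs_lt.mp (hdist m hm)
    have hn' := abs_lt.mp (hdist n hn)
    exact (P.abs_sub_le_φ _ _).trans (P.strictMonoOn_φ.monotoneOn (mem_Ici.mpr (abs_nonneg _))
      (mem_Ici.mpr (by linarith)) (abs_le.mpr ⟨by linarith, by linarith⟩))
  calc ((P.graph s ∩ ball x h).encard : ℝ≥0∞) ≤ (A.encard : ℝ≥0∞) + A.encard := by
        rw [graph, intGraph, ← image_preimage_eq_range_inter, (pt_graph_injective _).encard_image,
          ← ENat.toENNReal_add]
        exact ENat.toENNReal_le.mpr (encard_le_encard_natAbs_image_add _)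
    _ ≤ ENNReal.ofReal (P.φ (2 * h) + 1) + ENNReal.ofReal (P.φ (2 * h) + 1) :=
        add_le_add (encard_le_of_abs_sub_le hA) (encard_le_of_abs_sub_le hA)
    _ = ENNReal.ofReal (2 * (P.φ (2 * h) + 1)) := by
        rw [ENNReal.ofReal_mul zero_le_two, ENNReal.ofReal_ofNat, ← two_mul]

lemma le_encard_graph_inter_ball (s : ℝ) {h : ℝ} (hh : 0 < h) :
    ENNReal.ofReal (P.φ (h / 2)) ≤ ((P.graph s ∩ ball (pt 0 s) h).encard : ℝ≥0∞) := by
  rcases lt_or_ge (P.φ (h / 2)) 0 with hneg | hφ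
  · simp [ENNReal.ofReal_of_nonpos hneg.le]
  set N := ⌊P.φ (h / 2)⌋₊
  have hsub : (fun k : ℕ => pt ((k : ℤ) : ℝ) (P.y (k : ℤ).natAbs + s)) '' (Finset.range (N + 1))
      ⊆ P.graph s ∩ ball (pt 0 s) h := by
    rintro _ ⟨k, hk, rfl⟩
    refine ⟨⟨k, rfl⟩, ?_⟩
    have hkN : (k : ℝ) ≤ P.φ (h / 2) :=
      (Nat.cast_le.mpr (Nat.lt_succ_iff.mp (by simpa using hk))).trans (Nat.floor_le hφ)
    have hyk : P.y k ≤ h / 2 := (P.y_le_iff (by positivity)).mpr hkN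
    have hk' := (P.le_y k).trans hyk
    rw [mem_ball, dist_pt, Real.sqrt_lt' hh]
    simp only [Int.cast_natCast, Int.natAbs_natCast, sub_zero, add_sub_cancel_right]
    nlinarith [P.y_nonneg k, (Nat.cast_nonneg k : (0 : ℝ) ≤ k)]
  have hinj : Function.Injective fun k : ℕ => pt ((k : ℤ) : ℝ) (P.y (k : ℤ).natAbs + s) :=
    fun a b hab => Nat.cast_injective (pt_graph_injective (fun n => P.y n.natAbs + s) hab)
  calc ENNReal.ofReal (P.φ (h / 2)) ≤ ((N + 1 : ℕ) : ℝ≥0∞) := by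
        rw [← ENNReal.ofReal_natCast]
        exact ENNReal.ofReal_le_ofReal (by push_cast; exact (Nat.lt_floor_add_one _).le)
    _ = (((Finset.range (N + 1) : Set ℕ).encard : ℕ∞) : ℝ≥0∞) := by
        rw [encard_coe_eq_coe_finsetCard, Finset.card_range]
        rfl
    _ ≤ _ := by
        rw [← hinj.encard_image]
        exact ENat.toENNReal_le.mpr (encard_mono hsub)

end GrowthProfile

noncomputable def powerProfile {t : ℝ} (ht0 : 0 < t) (ht1 : t ≤ 1) : GrowthProfile where
  y k := (k : ℝ) ^ t⁻¹
  φ v := v ^ t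
  φ_y k := by
    rw [← Real.rpow_mul (Nat.cast_nonneg k), inv_mul_cancel₀ ht0.ne', Real.rpow_one]
  le_y k := by
    rcases Nat.eq_zero_or_pos k with rfl | hk
    · simp [Real.zero_rpow (inv_ne_zero ht0.ne')]
    · exact Real.self_le_rpow_of_one_le (by exact_mod_cast hk) ((one_le_inv₀ ht0).mpr ht1)
  strictMonoOn_φ := Real.strictMonoOn_rpow_Ici_of_exponent_pos ht0
  φ_add_le ha hb := Real.rpow_add_le_add_rpow ha hb ht0.le ht1

noncomputable def logProfile : GrowthProfile where
  y k := Real.exp k - 1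
  φ v := Real.log (1 + v)
  φ_y k := by simp
  le_y k := by linarith [Real.add_one_le_exp (k : ℝ)]
  strictMonoOn_φ a ha b _ hab := Real.log_lt_log (by simp only [mem_Ici] at ha; linarith)
    (by linarith)
  φ_add_le {a b} ha hb := by
    rw [← Real.log_mul (by positivity) (by positivity)]
    exact Real.log_le_log (by positivity) (by nlinarith)

lemma beurlingDim_powerProfile_graph {t : ℝ} (ht0 : 0 < t) (ht1 : t ≤ 1) (s : ℝ) :
    beurlingDim ((powerProfile ht0 ht1).graph s) = t := by
  refine beurlingDim_eq ht0.le (fun r _ hrt => ?_) (fun r hr htr => ?_)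
  · refine beurlingDensity_eq_top_of_eventually_rpow_le (c := (2 ^ t)⁻¹) (by positivity) hrt ?_
    filter_upwards [eventually_gt_atTop 0] with h hh
    refine ⟨pt 0 s, le_of_eq_of_le ?_ ((powerProfile ht0 ht1).le_encard_graph_inter_ball s hh)⟩
    simp only [powerProfile, Real.div_rpow hh.le zero_le_two]
    ring_nf
  · refine beurlingDensity_ne_top_of_eventually_le_rpow 6 ?_
    filter_upwards [eventually_ge_atTop 1] with h hh x
    refine ((powerProfile ht0 ht1).encard_graph_inter_ball_le s x h).trans
      (ENNReal.ofReal_le_ofReal ?_)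
    have h2t : (2 : ℝ) ^ t ≤ 2 := by
      simpa using Real.rpow_le_rpow_of_exponent_le one_le_two ht1
    have hht : h ^ t ≤ h ^ r := Real.rpow_le_rpow_of_exponent_le hh htr
    have hhr : 1 ≤ h ^ r := Real.one_le_rpow hh hr.le
    have : (2 * h) ^ t ≤ 2 * h ^ r := by
      rw [Real.mul_rpow zero_le_two (by linarith)]
      exact mul_le_mul h2t hht (by positivity) zero_le_two
    change 2 * ((2 * h) ^ t + 1) ≤ 6 * h ^ r
    linarith

lemma beurlingDim_logProfile_graph (s : ℝ) : beurlingDim (logProfile.graph s) = 0 := by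
  refine beurlingDim_eq le_rfl (fun r hr hr0 => absurd hr0 hr.not_gt) (fun r hr _ => ?_)
  refine beurlingDensity_ne_top_of_eventually_le_rpow (2 * 3 ^ r / r + 2) ?_
  filter_upwards [eventually_ge_atTop 1] with h hh x
  refine (logProfile.encard_graph_inter_ball_le s x h).trans (ENNReal.ofReal_le_ofReal ?_)
  have hlog : Real.log (1 + 2 * h) ≤ 3 ^ r * h ^ r / r :=
    calc Real.log (1 + 2 * h) ≤ (1 + 2 * h) ^ r / r := Real.log_le_rpow_div (by positivity) hr
      _ ≤ (3 * h) ^ r / r := by gcongr; linarith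
      _ = 3 ^ r * h ^ r / r := by rw [Real.mul_rpow zero_le_three (by linarith)]
  have hhr : 1 ≤ h ^ r := Real.one_le_rpow hh hr.le
  change 2 * (Real.log (1 + 2 * h) + 1) ≤ (2 * 3 ^ r / r + 2) * h ^ r
  have : (2 * 3 ^ r / r + 2) * h ^ r = 2 * (3 ^ r * h ^ r / r) + 2 * h ^ r := by ring
  linarith

lemma mk_plane : Cardinal.mk Plane = Cardinal.continuum := by
  rw [Cardinal.mk_congr (WithLp.equiv 2 (Fin 2 → ℝ))]
  simp only [Cardinal.mk_pi, Cardinal.prod_const, Cardinal.mk_real, Cardinal.lift_id,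
    Cardinal.mk_fin]
  exact_mod_cast Cardinal.power_nat_eq Cardinal.aleph0_le_continuum one_le_two

lemma mk_subtype_isSpectrum_muRB_le (p : Set Plane → Prop) :
    Cardinal.mk {Λ : Set Plane // IsSpectrum muRB Λ ∧ p Λ} ≤ Cardinal.continuum :=
  calc Cardinal.mk {Λ : Set Plane // IsSpectrum muRB Λ ∧ p Λ}
      ≤ Cardinal.mk {Λ : Set Plane // Cardinal.mk Λ ≤ Cardinal.aleph0} :=
        Cardinal.mk_subtype_mono fun Λ hΛ =>
          Cardinal.le_aleph0_iff_set_countable.mpr (countable_of_isOrthogonalSet_muRB hΛ.1.1)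
    _ ≤ max (Cardinal.mk Plane) Cardinal.aleph0 ^ Cardinal.aleph0 :=
        Cardinal.mk_bounded_set_le _ _
    _ = Cardinal.continuum := by
        rw [mk_plane, max_eq_left Cardinal.aleph0_le_continuum, Cardinal.continuum_power_aleph0]

/-- For every `t ∈ [0,1]`, the level set
`L_t = {Λ : Λ is a spectrum of μ_{R,B} and dim_Be(Λ) = t}` has the cardinality of the
continuum. -/
theorem levelSet_spectra_muRB_continuum (t : ℝ) (ht : t ∈ Set.Icc (0 : ℝ) 1) :
    Cardinal.mk {Λ : Set Plane // IsSpectrum muRB Λ ∧ beurlingDim Λ = t} =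
      Cardinal.continuum := by
  refine le_antisymm (mk_subtype_isSpectrum_muRB_le _) ?_
  obtain ⟨P, hP⟩ : ∃ P : GrowthProfile, ∀ s, beurlingDim (P.graph s) = t := by
    rcases ht.1.eq_or_lt with rfl | ht0
    · exact ⟨logProfile, beurlingDim_logProfile_graph⟩
    · exact ⟨powerProfile ht0 ht.2, beurlingDim_powerProfile_graph ht0 ht.2⟩
  calc Cardinal.continuum = Cardinal.mk ℝ := Cardinal.mk_real.symm
    _ ≤ _ := Cardinal.mk_le_of_injective
      (f := fun s => ⟨P.graph s, isSpectrum_muRB_intGraph _, hP s⟩)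
      fun s s' h => intGraph_add_const_injective _ (congrArg Subtype.val h)
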